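/- arXiv:2304.03071 — 9 statements merged into one kernel-verified Lean document; each statement's English description precedes it below -/
import Mathlib

section
/- Let A be a commutative ring and u, v, x, y in A such that uv-1 is invertible. Then M_4(x,u,v,y) = M_3(x + (1-v)(uv-1)^{-1}, uv-1, y + (1-u)(uv-1)^{-1}). -/
/-! Shifting the argument of `mat` is multiplication by an elementary transvection:
`mat (a + b) = transvection 0 1 b * mat a = mat a * transvection 1 0 (-b)`.
Peeling these shifts off both outer factors of the right-hand side removes `x` and `y`, and what
remains is the identity `mat v * mat u = T₁₀ * mat (uv - 1) * T₀₁` for two transvections,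
a direct 2 × 2 computation using `(uv - 1) w = 1`. -/

def mat {A : Type*} [CommRing A] (a : A) : Matrix (Fin 2) (Fin 2) A := !![a, -1; 1, 0]

def M {A : Type*} [CommRing A] {n : ℕ} (a : Fin n → A) : Matrix (Fin 2) (Fin 2) A :=
  ((List.ofFn a).map mat).reverse.prod

open Matrix

section
variable {A : Type*} [CommRing A]

lemma transvection_mul_mat (a b : A) : transvection 0 1 b * mat a = mat (a + b) := by
  ext i j
  fin_cases i <;> fin_cases j <;> simp [mat, transvection, mul_apply, Fin.sum_univ_two, add_comm]

lemma mat_mul_transvection (a b : A) : mat a * transvection 1 0 (-b) = mat (a + b) := by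
  ext i j
  fin_cases i <;> fin_cases j <;> simp [mat, transvection, mul_apply, Fin.sum_univ_two]

lemma mat_mul_mat_eq_of_mul_eq_one {u v w : A} (hw : (u * v - 1) * w = 1) :
    mat v * mat u =
      transvection 1 0 (-((1 - u) * w)) * mat (u * v - 1) * transvection 0 1 ((1 - v) * w) := by
  ext i j
  fin_cases i <;> fin_cases j <;> simp [mat, transvection, mul_apply, Fin.sum_univ_two]
  · ring
  · linear_combination -(1 - v) * hw
  · linear_combination (1 - u) * hw
  · linear_combination ((1 - u) * (1 - v) * w + 1) * hw
end

theorem stmt3 {A : Type*} [CommRing A] (u v x y : A) (h : IsUnit (u * v - 1)) :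
    mat y * mat v * mat u * mat x =
      mat (y + (1 - u) * Ring.inverse (u * v - 1)) * mat (u * v - 1) *
        mat (x + (1 - v) * Ring.inverse (u * v - 1)) := by
  rw [← mat_mul_transvection, ← transvection_mul_mat,
    Matrix.mul_assoc (mat y), mat_mul_mat_eq_of_mul_eq_one (Ring.mul_inverse_cancel _ h)]
  simp only [Matrix.mul_assoc]
end

section
/- Let A be a commutative ring, a a unit of A and b, x, y in A. Then M_5(x, a, a^{-1}, b, y) = M_3((a^2 x - 2a + b)·a^{-2}, -a, (a y - 1)·a^{-1}). -/
section
variable {A : Type*} [CommRing A]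

lemma mat_mul_mat_zero_mul_mat (c d : A) : mat c * mat 0 * mat d = -mat (c + d) := by
  ext i j
  fin_cases i <;> fin_cases j <;> simp [mat]

lemma mat_mul_mat_mul_mat_of_mul_eq_one {u v : A} (h : u * v = 1) (c d : A) :
    mat c * mat u * mat d = mat (c - v) * !![u, 0; 0, v] * mat (d - v) := by
  ext i j
  fin_cases i <;> fin_cases j <;> simp [mat]
  · linear_combination (c + d - v) * h
  · linear_combination -h
  · linear_combination h

lemma diag_mul_mat_of_mul_eq_one {u v : A} (h : u * v = 1) (c : A) :
    !![u, 0; 0, v] * mat c = mat (u ^ 2 * c) * !![v, 0; 0, u] := by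
  ext i j
  fin_cases i <;> fin_cases j <;> simp [mat]
  linear_combination -u * c * h

lemma mat_prod_five_eq_mat_prod_three_of_mul_eq_one {u v : A} (h : u * v = 1) (b x y : A) :
    mat y * mat b * mat v * mat u * mat x =
      mat ((u * y - 1) * v) * mat (-u) * mat ((u ^ 2 * x - 2 * u + b) * v ^ 2) := by
  have hvu : v * u = 1 := (mul_comm v u).trans h
  have hneg : -u * -v = 1 := (neg_mul_neg u v).trans h
  have hleft : mat b * mat v * mat u * mat x = mat (u ^ 2 * x - u + b) * !![-v, 0; 0, -u] :=
    calc mat b * mat v * mat u * mat x = mat (b - u) * (!![v, 0; 0, u] * mat 0) * mat x := by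
          rw [mat_mul_mat_mul_mat_of_mul_eq_one hvu, sub_self, mul_assoc (mat (b - u))]
      _ = mat (b - u) * mat 0 * (!![u, 0; 0, v] * mat x) := by
          rw [diag_mul_mat_of_mul_eq_one hvu, mul_zero, mul_assoc, mul_assoc, mul_assoc]
      _ = -mat (b - u + u ^ 2 * x) * !![v, 0; 0, u] := by
          rw [diag_mul_mat_of_mul_eq_one h, ← mul_assoc, mat_mul_mat_zero_mul_mat]
      _ = mat (u ^ 2 * x - u + b) * !![-v, 0; 0, -u] := by
          rw [neg_mul, ← mul_neg, sub_add_comm, add_comm]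
          simp
  have hright : mat ((u * y - 1) * v) * mat (-u) * mat ((u ^ 2 * x - 2 * u + b) * v ^ 2) =
      mat y * mat (u ^ 2 * x - u + b) * !![-v, 0; 0, -u] := by
    rw [mat_mul_mat_mul_mat_of_mul_eq_one hneg, mul_assoc, diag_mul_mat_of_mul_eq_one hneg,
      ← mul_assoc]
    congr 3
    · linear_combination y * h
    · linear_combination ((u ^ 2 * x - 2 * u + b) * (u * v + 1) + u) * h
  rw [hright]
  simp only [mul_assoc] at hleft ⊢
  rw [hleft]

end

theorem stmt4 {A : Type*} [CommRing A] (a : Aˣ) (b x y : A) :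
    mat y * mat b * mat ((a⁻¹ : Aˣ) : A) * mat (a : A) * mat x =
      mat (((a : A) * y - 1) * ((a⁻¹ : Aˣ) : A)) * mat (-(a : A)) *
        mat (((a : A) ^ 2 * x - 2 * (a : A) + b) * ((a⁻¹ : Aˣ) : A) ^ 2) :=
  mat_prod_five_eq_mat_prod_three_of_mul_eq_one a.mul_inv b x y
end

section
/- Let A be a commutative ring, λ a unit of A, n = 2m with m ≥ 2, and (a_1,...,a_{2m}) in A^{2m}. If M_{2m}(a_1,...,a_{2m}) = ε·Id with ε ∈ {1,-1}, then M_{2m}(λa_1, λ^{-1}a_2, λa_3, λ^{-1}a_4, ..., λa_{2m-1}, λ^{-1}a_{2m}) = ε·Id. -/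
open Matrix

section
variable {A : Type*} [CommRing A]

lemma diagonal_mul_diagonal_eq_one {x y : A} (h : x * y = 1) :
    diagonal ![x, 1] * diagonal ![y, 1] = 1 := by
  rw [diagonal_mul_diagonal, ← diagonal_one]
  congr 1
  ext i
  fin_cases i <;> simp [h]

lemma mat_units_inv_mul_mul_mat_units_mul (u : Aˣ) (a b : A) :
    mat (↑u⁻¹ * b) * mat (↑u * a) =
      diagonal ![(↑u⁻¹ : A), 1] * (mat b * mat a) * diagonal ![(u : A), 1] := by
  ext i j
  fin_cases i <;> fin_cases j <;>
    simp [mat, mul_apply, Fin.sum_univ_two, mul_comm, mul_left_comm]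

lemma M_succ {n : ℕ} (a : Fin (n + 1) → A) : M a = mat (a (Fin.last n)) * M (Fin.init a) := by
  rw [M, M, List.ofFn_succ', List.concat_eq_append, List.map_append, List.reverse_append]
  rfl

lemma M_succ_succ {n : ℕ} (a : Fin (n + 2) → A) :
    M a = mat (a (Fin.last (n + 1))) * mat (a (Fin.last n).castSucc) *
      M (fun i => a i.castSucc.castSucc) := by
  rw [M_succ, M_succ, mul_assoc]
  rfl

lemma M_alternating_scale (u : Aˣ) :
    ∀ {n : ℕ}, Even n → ∀ a : Fin n → A,
      M (fun i => if (i : ℕ) % 2 = 0 then (u : A) * a i else (↑u⁻¹ : A) * a i) =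
        diagonal ![(↑u⁻¹ : A), 1] * M a * diagonal ![(u : A), 1]
  | 0, _, _ => by simpa [M] using (diagonal_mul_diagonal_eq_one u.inv_mul).symm
  | 1, h, _ => absurd h Nat.not_even_one
  | n + 2, h, a => by
    have hn : Even n := by simpa [parity_simps] using h
    have heven : n % 2 = 0 := Nat.even_iff.mp hn
    have hodd : (n + 1) % 2 ≠ 0 := by omega
    have hcancel (X : Matrix (Fin 2) (Fin 2) A) :
        diagonal ![(u : A), 1] * (diagonal ![(↑u⁻¹ : A), 1] * X) = X := by
      rw [← mul_assoc, diagonal_mul_diagonal_eq_one u.mul_inv, one_mul]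
    rw [M_succ_succ, M_succ_succ]
    simp only [Fin.val_castSucc, Fin.val_last, if_neg hodd, if_pos heven]
    rw [M_alternating_scale u hn, mat_units_inv_mul_mul_mat_units_mul]
    simp only [mul_assoc, hcancel]

end

theorem stmt5_general {A : Type*} [CommRing A] (l : Aˣ) (m : ℕ)
    (a : Fin (2 * m) → A) (ε : A)
    (h : M a = ε • (1 : Matrix (Fin 2) (Fin 2) A)) :
    M (fun i => if (i : ℕ) % 2 = 0 then (l : A) * a i else ((l⁻¹ : Aˣ) : A) * a i) =
      ε • (1 : Matrix (Fin 2) (Fin 2) A) := by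
  rw [M_alternating_scale l (even_two_mul m), h, Matrix.mul_smul, mul_one, smul_mul,
    diagonal_mul_diagonal_eq_one l.inv_mul]

theorem stmt5 {A : Type*} [CommRing A] (l : Aˣ) (m : ℕ) (hm : 2 ≤ m)
    (a : Fin (2 * m) → A) (ε : A) (hε : ε = 1 ∨ ε = -1)
    (h : M a = ε • (1 : Matrix (Fin 2) (Fin 2) A)) :
    M (fun i => if (i : ℕ) % 2 = 0 then (l : A) * a i else ((l⁻¹ : Aˣ) : A) * a i) =
      ε • (1 : Matrix (Fin 2) (Fin 2) A) :=
  stmt5_general l m a ε h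
end

section
/- Let A be a commutative ring. A 4-tuple (a_1,a_2,a_3,a_4) in A^4 satisfies M_4(a_1,a_2,a_3,a_4) = ±Id if and only if it is of the form (-a, b, a, -b) with ab = 0, or of the form (a, b, a, b) with ab = 2. -/
theorem Matrix.of_fin_two_inj {α : Type*} {p q r s p' q' r' s' : α} :
    !![p, q; r, s] = !![p', q'; r', s'] ↔ p = p' ∧ q = q' ∧ r = r' ∧ s = s' := by
  simp only [EmbeddingLike.apply_eq_iff_eq, Matrix.vecCons_inj, and_true, and_assoc]

theorem Matrix.neg_one_fin_two {α : Type*} [AddGroupWithOne α] :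
    (-1 : Matrix (Fin 2) (Fin 2) α) = !![-1, 0; 0, -1] := by
  simp [Matrix.one_fin_two]

section

variable {A : Type*} [CommRing A]

theorem mat_mul_mat_mul_mat_mul_mat (a₁ a₂ a₃ a₄ : A) :
    mat a₄ * mat a₃ * mat a₂ * mat a₁ =
      !![(a₃ * a₄ - 1) * (a₁ * a₂ - 1) - a₁ * a₄, a₂ + a₄ - a₂ * a₃ * a₄;
        a₁ * a₂ * a₃ - a₁ - a₃, 1 - a₂ * a₃] := by
  simp only [mat, Matrix.mul_fin_two]
  ext i j
  fin_cases i <;> fin_cases j <;> simp <;> ring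

theorem mat_mul_mat_mul_mat_mul_mat_eq_one_iff (a₁ a₂ a₃ a₄ : A) :
    mat a₄ * mat a₃ * mat a₂ * mat a₁ = 1 ↔
      ∃ a b : A, a * b = 0 ∧ a₁ = -a ∧ a₂ = b ∧ a₃ = a ∧ a₄ = -b := by
  rw [mat_mul_mat_mul_mat_mul_mat, Matrix.one_fin_two, Matrix.of_fin_two_inj]
  constructor
  · rintro ⟨-, h₁₂, h₂₁, h₂₂⟩
    exact ⟨a₃, a₂, by linear_combination -h₂₂, by linear_combination -h₂₁ - a₁ * h₂₂, rfl, rfl,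
      by linear_combination h₁₂ - a₄ * h₂₂⟩
  · rintro ⟨a, b, hab, h₁, h₂, h₃, h₄⟩
    subst a₁ a₂ a₃ a₄
    exact ⟨by linear_combination (1 + a * b) * hab, by linear_combination b * hab,
      by linear_combination -a * hab, by linear_combination -hab⟩

theorem mat_mul_mat_mul_mat_mul_mat_eq_neg_one_iff (a₁ a₂ a₃ a₄ : A) :
    mat a₄ * mat a₃ * mat a₂ * mat a₁ = -1 ↔
      ∃ a b : A, a * b = 2 ∧ a₁ = a ∧ a₂ = b ∧ a₃ = a ∧ a₄ = b := by
  rw [mat_mul_mat_mul_mat_mul_mat, Matrix.neg_one_fin_two, Matrix.of_fin_two_inj]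
  constructor
  · rintro ⟨-, h₁₂, h₂₁, h₂₂⟩
    exact ⟨a₃, a₂, by linear_combination -h₂₂, by linear_combination h₂₁ + a₁ * h₂₂, rfl, rfl,
      by linear_combination -h₁₂ + a₄ * h₂₂⟩
  · rintro ⟨a, b, hab, h₁, h₂, h₃, h₄⟩
    subst a₁ a₂ a₃ a₄
    exact ⟨by linear_combination (a * b - 1) * hab, by linear_combination -b * hab,
      by linear_combination a * hab, by linear_combination -hab⟩

end

theorem stmt10 {A : Type*} [CommRing A] (a₁ a₂ a₃ a₄ : A) :
    (mat a₄ * mat a₃ * mat a₂ * mat a₁ = 1 ∨ mat a₄ * mat a₃ * mat a₂ * mat a₁ = -1) ↔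
      ((∃ a b : A, a * b = 0 ∧ a₁ = -a ∧ a₂ = b ∧ a₃ = a ∧ a₄ = -b) ∨
        (∃ a b : A, a * b = 2 ∧ a₁ = a ∧ a₂ = b ∧ a₃ = a ∧ a₄ = b)) := by
  rw [mat_mul_mat_mul_mat_mul_mat_eq_one_iff, mat_mul_mat_mul_mat_mul_mat_eq_neg_one_iff]
end

section
/- Let q be a prime power, B in SL_2(F_q), and for n ≥ 1 let u_n^B denote the number of n-tuples (a_1,...,a_n) in F_q^n with M_n(a_1,...,a_n) = B. Then for all n > 4: u_n^B = (q-1)(u_{n-1}^B - q·u_{n-3}^{-B}) + q·u_{n-2}^{-B} + q·(u_{n-2}^B - q·u_{n-4}^{-B}). -/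
open Matrix
open scoped Classical

section Words

variable {R : Type*} [CommRing R]

theorem M_append {m k : ℕ} (a : Fin m → R) (b : Fin k → R) :
    M (Fin.append a b) = M b * M a := by
  simp [M, List.ofFn_fin_append, List.reverse_append]

theorem M_fin_one (a : Fin 1 → R) : M a = mat (a 0) := by
  simp [M]

theorem det_mat (x : R) : (mat x).det = 1 := by
  simp [mat]

theorem det_M {n : ℕ} (a : Fin n → R) : (M a).det = 1 := by
  rw [M, ← coe_detMonoidHom, map_list_prod]
  simp [Function.comp_def, det_mat]

theorem det_mul_adjugate_mat (B : Matrix (Fin 2) (Fin 2) R) (x : R) :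
    (B * adjugate (mat x)).det = B.det := by
  simp [det_adjugate, det_mat]

theorem mul_adjugate_mat_one_zero (B : Matrix (Fin 2) (Fin 2) R) (x : R) :
    (B * adjugate (mat x)) 1 0 = -B 1 1 := by
  simp [mat, adjugate_fin_two, mul_apply, Fin.sum_univ_two]

theorem mul_adjugate_mat_one_one (B : Matrix (Fin 2) (Fin 2) R) (x : R) :
    (B * adjugate (mat x)) 1 1 = B 1 0 + B 1 1 * x := by
  simp [mat, adjugate_fin_two, mul_apply, Fin.sum_univ_two]

theorem apply_one_zero_ne_zero_of_det_eq_one [Nontrivial R] {B : Matrix (Fin 2) (Fin 2) R}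
    (hB : B.det = 1) (ht : B 1 1 = 0) : B 1 0 ≠ 0 := by
  rintro hs
  simp [det_fin_two, ht, hs] at hB

end Words

theorem Fintype.sum_ite_eq_else {α R : Type*} [Fintype α] [DecidableEq α] [CommRing R]
    (a : α) (c d : R) :
    ∑ y : α, (if y = a then c else d) = c + (Fintype.card α - 1) * d := by
  have split (y : α) : (if y = a then c else d) = (if y = a then c - d else 0) + d := by
    split_ifs <;> ring
  simp only [split, Finset.sum_add_distrib, Finset.sum_ite_eq', Finset.mem_univ, if_true,
    Finset.sum_const, Finset.card_univ, nsmul_eq_mul]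
  ring

theorem Fintype.sum_comp_add_mul {F N : Type*} [Field F] [Fintype F] [AddCommMonoid N]
    (s t : F) (g : F → N) :
    ∑ x, g (s + t * x) = if t = 0 then Fintype.card F • g s else ∑ y, g y := by
  split_ifs with ht
  · simp [ht]
  · exact Fintype.sum_equiv ((Equiv.mulLeft₀ t ht).trans (Equiv.addLeft s)) _ _ fun _ => rfl

section Counting

variable {F : Type*} [Field F]

noncomputable def wordCount (k : ℕ) (C : Matrix (Fin 2) (Fin 2) F) : ℤ :=
  Nat.card {a : Fin k → F // M a = C}

theorem natCard_eq_wordCount (k : ℕ) (C : Matrix (Fin 2) (Fin 2) F) :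
    (Nat.card {a : Fin k → F // M a = C} : ℤ) = wordCount k C := rfl

variable [Fintype F]

theorem wordCount_eq_sum (k : ℕ) (C : Matrix (Fin 2) (Fin 2) F) :
    wordCount k C = ∑ a : Fin k → F, if M a = C then 1 else 0 := by
  rw [wordCount, Nat.card_eq_fintype_card, Fintype.card_subtype, Finset.card_filter]
  push_cast
  rfl

theorem wordCount_add (m k : ℕ) (B : Matrix (Fin 2) (Fin 2) F) :
    wordCount (m + k) B = ∑ h : Fin m → F, wordCount k (B * adjugate (M h)) := by
  have solve (h : Fin m → F) (t : Fin k → F) : M t * M h = B ↔ M t = B * adjugate (M h) := by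
    constructor
    · rintro rfl
      rw [mul_assoc, mul_adjugate, det_M, one_smul, mul_one]
    · rintro ht
      rw [ht, mul_assoc, adjugate_mul, det_M, one_smul, mul_one]
  simp only [wordCount_eq_sum]
  rw [← (Fin.appendEquiv m k).sum_comp, Fintype.sum_prod_type]
  simp [Fin.appendEquiv, M_append, solve]

theorem wordCount_succ (k : ℕ) (B : Matrix (Fin 2) (Fin 2) F) :
    wordCount (k + 1) B = ∑ x : F, wordCount k (B * adjugate (mat x)) := by
  rw [add_comm, wordCount_add, ← (Equiv.funUnique (Fin 1) F).symm.sum_comp]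
  simp [M_fin_one]

theorem wordCount_succ_of_eq_bottomRow {k : ℕ} (f : F → F → ℤ)
    (hf : ∀ C : Matrix (Fin 2) (Fin 2) F, C.det = 1 → wordCount k C = f (C 1 0) (C 1 1))
    (B : Matrix (Fin 2) (Fin 2) F) (hB : B.det = 1) :
    wordCount (k + 1) B =
      if B 1 1 = 0 then Fintype.card F * f 0 (B 1 0) else ∑ y, f (-B 1 1) y := by
  rw [wordCount_succ]
  simp only [fun x => hf _ ((det_mul_adjugate_mat B x).trans hB), mul_adjugate_mat_one_zero,
    mul_adjugate_mat_one_one, Fintype.sum_comp_add_mul, nsmul_eq_mul]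
  split_ifs with h <;> simp [h]

theorem wordCount_one (B : Matrix (Fin 2) (Fin 2) F) (hB : B.det = 1) :
    wordCount 1 B = if B 1 0 = 1 ∧ B 1 1 = 0 then 1 else 0 := by
  have solve (x : F) : mat x = B ↔ x = B 0 0 ∧ B 1 0 = 1 ∧ B 1 1 = 0 := by
    rw [det_fin_two] at hB
    simp only [← Matrix.ext_iff, Fin.forall_fin_two, mat, of_apply, cons_val', cons_val_zero,
      cons_val_one, empty_val', cons_val_fin_one]
    constructor
    · rintro ⟨⟨h00, -⟩, h10, h11⟩
      exact ⟨h00, h10.symm, h11.symm⟩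
    · rintro ⟨h00, h10, h11⟩
      rw [h10, h11] at hB
      exact ⟨⟨h00, by linear_combination hB⟩, h10.symm, h11.symm⟩
  rw [wordCount_eq_sum, ← (Equiv.funUnique (Fin 1) F).symm.sum_comp]
  simp [M_fin_one, solve, ite_and]

theorem wordCount_two (B : Matrix (Fin 2) (Fin 2) F) (hB : B.det = 1) :
    wordCount 2 B = if B 1 1 = -1 then 1 else 0 := by
  rw [wordCount_succ_of_eq_bottomRow (fun s t => if s = 1 ∧ t = 0 then 1 else 0)
    wordCount_one B hB]
  by_cases ht : B 1 1 = 0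
  · simp [ht]
  · simp [ht, ite_and, neg_eq_iff_eq_neg]

theorem wordCount_three (B : Matrix (Fin 2) (Fin 2) F) (hB : B.det = 1) :
    wordCount 3 B = if B 1 1 = 0 then (if B 1 0 = -1 then (Fintype.card F : ℤ) else 0) else 1 := by
  rw [wordCount_succ_of_eq_bottomRow (fun _ t => if t = -1 then 1 else 0) wordCount_two B hB]
  by_cases ht : B 1 1 = 0 <;> simp [ht]

theorem wordCount_four (B : Matrix (Fin 2) (Fin 2) F) (hB : B.det = 1) :
    wordCount 4 B = Fintype.card F - 1 + (if B 1 1 = 0 then 1 else 0) +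
      (if B 1 1 = 1 then (Fintype.card F : ℤ) else 0) := by
  rw [wordCount_succ_of_eq_bottomRow
    (fun s t => if t = 0 then (if s = -1 then (Fintype.card F : ℤ) else 0) else 1)
    wordCount_three B hB]
  by_cases ht : B 1 1 = 0
  · simp [ht, apply_one_zero_ne_zero_of_det_eq_one hB ht]
  · simp [ht, Fintype.sum_ite_eq_else, neg_eq_iff_eq_neg]
    split_ifs <;> ring

theorem wordCount_five (B : Matrix (Fin 2) (Fin 2) F) (hB : B.det = 1) :
    wordCount 5 B = if B 1 1 = 0 then
        Fintype.card F * (Fintype.card F - 1) +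
          (if B 1 0 = 1 then (Fintype.card F : ℤ) * Fintype.card F else 0)
      else Fintype.card F * Fintype.card F + 1 := by
  rw [wordCount_succ_of_eq_bottomRow
    (fun _ t => Fintype.card F - 1 + (if t = 0 then 1 else 0) +
      (if t = 1 then (Fintype.card F : ℤ) else 0))
    wordCount_four B hB]
  by_cases ht : B 1 1 = 0
  · simp [ht, apply_one_zero_ne_zero_of_det_eq_one hB ht]
    split_ifs <;> ring
  · simp [ht, Finset.sum_add_distrib]
    ring

theorem wordCount_five_eq (B : Matrix (Fin 2) (Fin 2) F) (hB : B.det = 1) :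
    wordCount 5 B = (Fintype.card F - 1) * (wordCount 4 B - Fintype.card F * wordCount 2 (-B))
      + Fintype.card F * wordCount 3 (-B)
      + Fintype.card F * (wordCount 3 B - Fintype.card F * wordCount 1 (-B)) := by
  have hB' : (-B).det = 1 := by simp [det_neg, hB]
  rw [wordCount_five B hB, wordCount_four B hB, wordCount_three B hB, wordCount_three _ hB',
    wordCount_two _ hB', wordCount_one _ hB']
  by_cases ht : B 1 1 = 0 <;> simp [ht, neg_eq_iff_eq_neg] <;> ring

end Counting

theorem stmt12 {F : Type*} [Field F] [Fintype F]
    (B : Matrix (Fin 2) (Fin 2) F) (hB : B.det = 1) (n : ℕ) (hn : 4 < n) :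
    (Nat.card {a : Fin n → F // M a = B} : ℤ) =
      ((Fintype.card F : ℤ) - 1) *
          ((Nat.card {a : Fin (n - 1) → F // M a = B} : ℤ) -
            (Fintype.card F : ℤ) * (Nat.card {a : Fin (n - 3) → F // M a = -B} : ℤ)) +
        (Fintype.card F : ℤ) * (Nat.card {a : Fin (n - 2) → F // M a = -B} : ℤ) +
        (Fintype.card F : ℤ) *
          ((Nat.card {a : Fin (n - 2) → F // M a = B} : ℤ) -
            (Fintype.card F : ℤ) * (Nat.card {a : Fin (n - 4) → F // M a = -B} : ℤ)) := by
  obtain ⟨m, rfl⟩ : ∃ m, n = m + 5 := ⟨n - 5, by omega⟩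
  simp only [natCard_eq_wordCount, show m + 5 - 1 = m + 4 by omega,
    show m + 5 - 2 = m + 3 by omega, show m + 5 - 3 = m + 2 by omega,
    show m + 5 - 4 = m + 1 by omega, wordCount_add m, neg_mul]
  have hdet (h : Fin m → F) : (B * adjugate (M h)).det = 1 := by
    rw [det_mul, det_adjugate, det_M, hB]
    simp
  simp only [fun h => wordCount_five_eq _ (hdet h), Finset.sum_add_distrib,
    Finset.sum_sub_distrib, ← Finset.mul_sum]
end

section
/- Let q be a power of an odd prime and n = 2m with n > 4. Let u_n^+ (resp. u_n^-) denote the number of n-tuples in F_q^n with M_n product equal to Id (resp. -Id). Then u_{2m}^+ = (q-1)·u_{2m-1}^+ + q·u_{2m-2}^-. -/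
open Matrix

namespace ContinuantMatrix

variable {R : Type*} [CommRing R]

def matInv (x : R) : Matrix (Fin 2) (Fin 2) R := !![0, 1; -1, x]

lemma mat_mul_matInv (x : R) : mat x * matInv x = 1 := by
  simp [mat, matInv, one_fin_two]

lemma matInv_mul_mat (x : R) : matInv x * mat x = 1 := by
  simp [mat, matInv, one_fin_two]

lemma M_elim0 : M (Fin.elim0 : Fin 0 → R) = 1 := by
  simp [M]

lemma M_cons {n : ℕ} (x : R) (b : Fin n → R) : M (Fin.cons x b) = M b * mat x := by
  simp [M, List.ofFn_succ]

lemma M_snoc {n : ℕ} (b : Fin n → R) (x : R) : M (Fin.snoc b x) = mat x * M b := by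
  rw [M, List.ofFn_succ']
  simp [M]

lemma M_cons_eq_iff {n : ℕ} (x : R) (b : Fin n → R) (A : Matrix (Fin 2) (Fin 2) R) :
    M (Fin.cons x b) = A ↔ M b = A * matInv x := by
  rw [M_cons]
  constructor
  · rintro rfl
    rw [mul_assoc, mat_mul_matInv, mul_one]
  · intro h
    rw [h, mul_assoc, matInv_mul_mat, mul_one]

lemma M_add_single_last {k : ℕ} (a : Fin (k + 1) → R) (s : R) :
    M (a + Pi.single (Fin.last k) s) = !![1, s; 0, 1] * M a := by
  induction a using Fin.snocCases with
  | _ b x =>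
  have : Fin.snoc b x + Pi.single (Fin.last k) s = (Fin.snoc b (x + s) : Fin (k + 1) → R) := by
    ext i
    induction i using Fin.lastCases <;> simp [Fin.castSucc_ne_last]
  rw [this, M_snoc, M_snoc, ← mul_assoc]
  congr 1
  simp [mat, add_comm]

lemma M_add_single_zero {k : ℕ} (a : Fin (k + 1) → R) (t : R) :
    M (a + Pi.single 0 t) = M a * !![1, 0; -t, 1] := by
  induction a using Fin.consCases with
  | _ x b =>
  have : Fin.cons x b + Pi.single 0 t = (Fin.cons (x + t) b : Fin (k + 1) → R) := by
    ext i
    induction i using Fin.cases <;> simp [Fin.succ_ne_zero]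
  rw [this, M_cons, M_cons, mul_assoc]
  congr 1
  simp [mat]

def altScale (n : ℕ) (u : Rˣ) : (Fin n → R) ≃ (Fin n → R) :=
  Equiv.piCongrRight fun i => Units.mulLeft (if Even (i : ℕ) then u else u⁻¹)

lemma altScale_snoc {n : ℕ} (u : Rˣ) (b : Fin n → R) (x : R) :
    altScale (n + 1) u (Fin.snoc b x) =
      Fin.snoc (altScale n u b) (↑(if Even n then u else u⁻¹) * x) := by
  ext i
  induction i using Fin.lastCases <;> simp [altScale]

lemma M_altScale (u : Rˣ) {n : ℕ} (a : Fin n → R) :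
    M (altScale n u a) =
      diagonal (if Even n then ![1, (u : R)] else ![(u : R), 1]) * M a *
        diagonal ![1, ((u⁻¹ : Rˣ) : R)] := by
  induction a using Fin.snocInduction with
  | elim0 =>
    rw [Subsingleton.elim (altScale 0 u _) Fin.elim0, M_elim0]
    simp [diagonal_fin_two, one_fin_two]
  | @snoc n b x ih =>
    have hmat : mat (↑(if Even n then u else u⁻¹) * x) *
        diagonal (if Even n then ![1, (u : R)] else ![(u : R), 1]) =
        diagonal (if Even (n + 1) then ![1, (u : R)] else ![(u : R), 1]) * mat x := by
      by_cases hn : Even n <;>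
        simp [hn, Nat.even_add_one, mat, diagonal_fin_two, mul_comm, mul_left_comm]
    rw [altScale_snoc, M_snoc, M_snoc, ih, ← mul_assoc, ← mul_assoc, hmat, mul_assoc _ (mat x)]

noncomputable def fiberCard (n : ℕ) (A : Matrix (Fin 2) (Fin 2) R) : ℕ :=
  Nat.card {a : Fin n → R // M a = A}

lemma fiberCard_mul_mul {n : ℕ} (e : (Fin n → R) ≃ (Fin n → R))
    {U V : Matrix (Fin 2) (Fin 2) R} (hU : IsUnit U) (hV : IsUnit V)
    (he : ∀ a, M (e a) = U * M a * V) (A : Matrix (Fin 2) (Fin 2) R) :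
    fiberCard n (U * A * V) = fiberCard n A :=
  Nat.card_congr (e.subtypeEquiv fun a => by
    rw [he]
    exact ⟨fun h => by rw [h], fun h => hU.mul_left_cancel (hV.mul_right_cancel h)⟩).symm

lemma fiberCard_upper_mul (k : ℕ) (s : R) (A : Matrix (Fin 2) (Fin 2) R) :
    fiberCard (k + 1) (!![1, s; 0, 1] * A) = fiberCard (k + 1) A := by
  simpa using fiberCard_mul_mul (Equiv.addRight (Pi.single (Fin.last k) s))
    (U := !![1, s; 0, 1]) (V := 1) ((isUnit_iff_isUnit_det _).2 (by simp [det_fin_two_of]))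
    isUnit_one (fun a => by rw [Equiv.coe_addRight, M_add_single_last, mul_one]) A

lemma fiberCard_mul_lower (k : ℕ) (t : R) (A : Matrix (Fin 2) (Fin 2) R) :
    fiberCard (k + 1) (A * !![1, 0; t, 1]) = fiberCard (k + 1) A := by
  simpa using fiberCard_mul_mul (Equiv.addRight (Pi.single 0 (-t))) (U := 1)
    (V := !![1, 0; t, 1]) isUnit_one ((isUnit_iff_isUnit_det _).2 (by simp [det_fin_two_of]))
    (fun a => by rw [Equiv.coe_addRight, M_add_single_zero, neg_neg, one_mul]) A

lemma fiberCard_diagonal_of_odd {n : ℕ} (hn : Odd n) (u : Rˣ) :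
    fiberCard n (diagonal ![(u : R), ↑u⁻¹]) = fiberCard n (1 : Matrix (Fin 2) (Fin 2) R) := by
  have := fiberCard_mul_mul (altScale n u) (U := diagonal ![(u : R), 1])
    (V := diagonal ![1, ((u⁻¹ : Rˣ) : R)]) ((isUnit_iff_isUnit_det _).2 (by simp))
    ((isUnit_iff_isUnit_det _).2 (by simp))
    (fun a => by simpa [Nat.not_even_iff_odd.2 hn] using M_altScale u a) 1
  simpa [diagonal_fin_two] using this

lemma fiberCard_matInv_of_odd {n : ℕ} (hn : Odd n) (u : Rˣ) :
    fiberCard n (matInv (u : R)) = fiberCard n (1 : Matrix (Fin 2) (Fin 2) R) := by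
  obtain ⟨k, rfl⟩ : ∃ k, n = k + 1 := ⟨n - 1, by have := hn.pos; omega⟩
  have : matInv (u : R) =
      !![1, ((u⁻¹ : Rˣ) : R); 0, 1] *
        (diagonal ![((u⁻¹ : Rˣ) : R), ↑u] * !![1, 0; -((u⁻¹ : Rˣ) : R), 1]) := by
    simp [matInv, diagonal_fin_two]
  rw [this, fiberCard_upper_mul, fiberCard_mul_lower]
  simpa using fiberCard_diagonal_of_odd hn u⁻¹

variable [Fintype R]

lemma fiberCard_succ (k : ℕ) (A : Matrix (Fin 2) (Fin 2) R) :
    fiberCard (k + 1) A = ∑ x, fiberCard k (A * matInv x) := by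
  let e : {p : R × (Fin k → R) // M p.2 = A * matInv p.1} ≃ {a : Fin (k + 1) → R // M a = A} :=
    (Fin.consEquiv fun _ => R).subtypeEquiv fun p => (M_cons_eq_iff p.1 p.2 A).symm
  rw [fiberCard, ← Nat.card_congr e,
    Nat.card_congr (Equiv.subtypeProdEquivSigmaSubtype fun x b => M b = A * matInv x),
    Nat.card_sigma]
  rfl

lemma fiberCard_matInv_zero (k : ℕ) :
    fiberCard (k + 2) (matInv (0 : R)) =
      Fintype.card R * fiberCard (k + 1) (-1 : Matrix (Fin 2) (Fin 2) R) := by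
  have h (y : R) : matInv 0 * matInv y = !![1, -y; 0, 1] * -1 := by
    ext i j; fin_cases i <;> fin_cases j <;> simp [matInv]
  simp only [fiberCard_succ (k + 1), h, fiberCard_upper_mul, Finset.sum_const, Finset.card_univ,
    smul_eq_mul]

end ContinuantMatrix

open ContinuantMatrix in
theorem stmt14_general {F : Type*} [Field F] [Fintype F]
    (n m : ℕ) (hnm : n = 2 * m) (hn : 4 < n) :
    Nat.card {a : Fin n → F // M a = 1} =
      (Fintype.card F - 1) * Nat.card {a : Fin (n - 1) → F // M a = 1} +
        Fintype.card F * Nat.card {a : Fin (n - 2) → F // M a = -1} := by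
  classical
  obtain ⟨k, rfl⟩ : ∃ k, n = k + 3 := ⟨n - 3, by omega⟩
  have hodd : Odd (k + 2) := ⟨m - 1, by omega⟩
  change fiberCard (k + 3) 1 =
    (Fintype.card F - 1) * fiberCard (k + 2) 1 + Fintype.card F * fiberCard (k + 1) (-1)
  have hrest : ∑ x ∈ (Finset.univ : Finset F).erase 0, fiberCard (k + 2) (matInv x) =
      (Fintype.card F - 1) * fiberCard (k + 2) (1 : Matrix (Fin 2) (Fin 2) F) := by
    rw [Finset.sum_congr rfl fun x hx =>
      fiberCard_matInv_of_odd hodd (Units.mk0 x (Finset.ne_of_mem_erase hx))]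
    simp [Finset.card_erase_of_mem]
  rw [fiberCard_succ, ← Finset.add_sum_erase _ _ (Finset.mem_univ 0)]
  simp only [one_mul]
  rw [fiberCard_matInv_zero, hrest, add_comm]

theorem stmt14 {F : Type*} [Field F] [Fintype F] (hq : Odd (Fintype.card F))
    (n m : ℕ) (hnm : n = 2 * m) (hn : 4 < n) :
    Nat.card {a : Fin n → F // M a = 1} =
      (Fintype.card F - 1) * Nat.card {a : Fin (n - 1) → F // M a = 1} +
        Fintype.card F * Nat.card {a : Fin (n - 2) → F // M a = -1} :=
  stmt14_general n m hnm hn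
end

section
/- Let q be a power of an odd prime and n > 4 odd. Then the number of n-tuples (a_1,...,a_n) in F_q^n with M_n(a_1,...,a_n) = Id equals (q^{n-1} - 1)/(q^2 - 1), and the same formula holds for M_n(a_1,...,a_n) = -Id. -/
namespace Quiddity

open Finset Matrix

section CommRing

variable {R : Type*} [CommRing R]

def wedge (u v : Fin 2 → R) : R := u 0 * v 1 - u 1 * v 0

@[simp] lemma wedge_zero_left (v : Fin 2 → R) : wedge 0 v = 0 := by simp [wedge]

@[simp] lemma wedge_zero_right (v : Fin 2 → R) : wedge v 0 = 0 := by simp [wedge]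

@[simp] lemma wedge_self (v : Fin 2 → R) : wedge v v = 0 := by simp [wedge]; ring

lemma wedge_add_left (u u' v : Fin 2 → R) : wedge (u + u') v = wedge u v + wedge u' v := by
  simp only [wedge, Pi.add_apply]; ring

lemma wedge_smul_left (c : R) (u v : Fin 2 → R) : wedge (c • u) v = c * wedge u v := by
  simp only [wedge, Pi.smul_apply, smul_eq_mul]; ring

lemma wedge_smul_right (c : R) (u v : Fin 2 → R) : wedge u (c • v) = c * wedge u v := by
  simp only [wedge, Pi.smul_apply, smul_eq_mul]; ring

lemma wedge_neg_left (u v : Fin 2 → R) : wedge (-u) v = -wedge u v := by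
  simp only [wedge, Pi.neg_apply]; ring

lemma wedge_swap (u v : Fin 2 → R) : wedge v u = -wedge u v := by
  simp only [wedge]; ring

lemma wedge_add_smul_self (v p : Fin 2 → R) (c : R) : wedge v (p + c • v) = wedge v p := by
  simp only [wedge, Pi.add_apply, Pi.smul_apply, smul_eq_mul]; ring

/-- Cramer's rule in the plane. -/
lemma wedge_smul_eq (u p x : Fin 2 → R) : wedge u p • x = wedge u x • p + wedge x p • u := by
  ext i; fin_cases i <;> simp [wedge] <;> ring

lemma eq_smul_of_wedge_eq_zero {v p w : Fin 2 → R} (hp : wedge v p = 1) (hw : wedge v w = 0) :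
    w = wedge w p • v := by
  simpa [hp, hw] using wedge_smul_eq v p w

lemma wedge_row_one_neg_row_zero (g : Matrix (Fin 2) (Fin 2) R) :
    wedge (g 1) (-g 0) = g.det := by
  simp [wedge, det_fin_two]; ring

def matInv (b : R) : Matrix (Fin 2) (Fin 2) R := !![0, 1; -1, b]

lemma mat_mul_eq_iff (b : R) (X g : Matrix (Fin 2) (Fin 2) R) :
    mat b * X = g ↔ X = matInv b * g := by
  have h1 : mat b * matInv b = 1 := by ext i j; fin_cases i <;> fin_cases j <;> simp [mat, matInv]
  have h2 : matInv b * mat b = 1 := by ext i j; fin_cases i <;> fin_cases j <;> simp [mat, matInv]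
  constructor
  · rintro rfl; rw [← Matrix.mul_assoc, h2, Matrix.one_mul]
  · rintro rfl; rw [← Matrix.mul_assoc, h1, Matrix.one_mul]

lemma matInv_mul_row_one (b : R) (g : Matrix (Fin 2) (Fin 2) R) :
    (matInv b * g) 1 = -g 0 + b • g 1 := by
  ext j; simp [matInv, Matrix.mul_apply, Fin.sum_univ_two]

lemma det_matInv_mul (b : R) (g : Matrix (Fin 2) (Fin 2) R) : (matInv b * g).det = g.det := by
  rw [det_mul, show (matInv b).det = 1 by simp [matInv, det_fin_two], one_mul]

lemma mat_eq_iff {b : R} {g : Matrix (Fin 2) (Fin 2) R} (hg : g.det = 1) :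
    mat b = g ↔ g 1 = ![1, 0] ∧ b = g 0 0 := by
  constructor
  · rintro rfl
    exact ⟨by ext j; fin_cases j <;> rfl, rfl⟩
  · rintro ⟨h1, rfl⟩
    have h10 : g 1 0 = 1 := congrFun h1 0
    have h11 : g 1 1 = 0 := congrFun h1 1
    rw [det_fin_two, h10, h11] at hg
    ext i j
    fin_cases i <;> fin_cases j <;> simp [mat, h10, h11]
    linear_combination hg

lemma M_snoc {k : ℕ} (a : Fin k → R) (b : R) :
    M (Fin.snoc a b : Fin (k + 1) → R) = mat b * M a := by
  rw [M, List.ofFn_succ']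
  simp [M]

variable [Fintype R] [DecidableEq R]

lemma sum_ite_wedge_eq_one {v p : Fin 2 → R} (hp : wedge v p = 1) (f : (Fin 2 → R) → ℚ) :
    ∑ x, (if wedge v x = 1 then f x else 0) = ∑ c : R, f (p + c • v) := by
  rw [← Finset.sum_filter]
  symm
  refine Finset.sum_nbij' (fun c => p + c • v) (fun x => wedge x p) ?_ ?_ ?_ ?_ fun _ _ => rfl
  · simp [wedge_add_smul_self, hp]
  · simp
  · intro c _
    simp [wedge_add_left, wedge_smul_left, hp]
  · intro x hx
    simp only [mem_filter, mem_univ, true_and] at hx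
    simpa [hx, hp, add_comm] using (wedge_smul_eq v p x).symm

def adj : Matrix (Fin 2 → R) (Fin 2 → R) ℚ :=
  Matrix.of fun u v => if wedge u v = 1 then 1 else 0

lemma adj_mulVec_apply {v p : Fin 2 → R} (hp : wedge v p = 1) (x : (Fin 2 → R) → ℚ) :
    (adj *ᵥ x) v = ∑ c : R, x (p + c • v) := by
  simp only [mulVec, dotProduct, adj, of_apply, boole_mul]
  exact sum_ite_wedge_eq_one hp x

lemma card_M_succ {k : ℕ} (g : Matrix (Fin 2) (Fin 2) R) :
    (Nat.card {a : Fin (k + 1) → R // M a = g} : ℚ)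
      = ∑ b, (Nat.card {a : Fin k → R // M a = matInv b * g} : ℚ) := by
  simp only [Nat.card_eq_fintype_card, Fintype.card_subtype, Finset.card_filter, Nat.cast_sum,
    Nat.cast_ite, Nat.cast_one, Nat.cast_zero]
  rw [← (Fin.snocEquiv fun _ => R).sum_comp, Fintype.sum_prod_type]
  simp only [Fin.snocEquiv, Equiv.coe_fn_mk, M_snoc, mat_mul_eq_iff]

lemma card_M_eq {g : Matrix (Fin 2) (Fin 2) R} (hg : g.det = 1) (k : ℕ) :
    (Nat.card {a : Fin (k + 1) → R // M a = g} : ℚ)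
      = (adj ^ k *ᵥ Pi.single ![1, 0] 1) (g 1) := by
  induction k generalizing g with
  | zero =>
    rw [card_M_succ]
    have hcard : ∀ b : R, (Nat.card {a : Fin 0 → R // M a = matInv b * g} : ℚ)
        = if mat b = g then 1 else 0 := by
      intro b
      have hM : ∀ a : Fin 0 → R, M a = matInv b * g ↔ mat b = g := fun a => by
        rw [← mul_one (mat b), mat_mul_eq_iff]; simp [M]
      by_cases h : mat b = g <;> simp [hM, h]
    rw [Finset.sum_congr rfl fun b _ => hcard b]
    by_cases h : g 1 = ![1, 0] <;> simp [mat_eq_iff hg, one_apply, h]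
  | succ k ih =>
    rw [card_M_succ, pow_succ', ← mulVec_mulVec,
      adj_mulVec_apply (p := -g 0) (by rw [wedge_row_one_neg_row_zero, hg])]
    simp only [ih ((det_matInv_mul _ _).trans hg), matInv_mul_row_one]

end CommRing

section Field

variable {F : Type*} [Field F]

lemma exists_wedge_eq_one {v : Fin 2 → F} (hv : v ≠ 0) : ∃ p, wedge v p = 1 := by
  by_cases h0 : v 0 = 0
  · have h1 : v 1 ≠ 0 := fun h1 => hv (by ext i; fin_cases i <;> assumption)
    exact ⟨![-(v 1)⁻¹, 0], by simp [wedge, h0, h1]⟩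
  · exact ⟨![0, (v 0)⁻¹], by simp [wedge, h0]⟩

lemma add_smul_ne_zero_of_wedge_eq_one {v p : Fin 2 → F} (hp : wedge v p = 1) (c : F) :
    p + c • v ≠ 0 := by
  intro h
  simpa [h, hp] using wedge_add_smul_self v p c

variable [DecidableEq F]

def indNonzero (v : Fin 2 → F) : ℚ := if v ≠ 0 then 1 else 0

def indLine (w v : Fin 2 → F) : ℚ := if v ≠ 0 ∧ wedge v w = 0 then 1 else 0

lemma indLine_smul {c : F} (hc : c ≠ 0) (w : Fin 2 → F) : indLine (c • w) = indLine w := by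
  ext v
  simp [indLine, wedge_smul_right, hc]

variable [Fintype F]

local notation "q" => (Fintype.card F : ℚ)

lemma sum_boole_add_mul_eq (a b : F) {t : F} (ht : t ≠ 0) :
    ∑ c : F, (if a + c * t = b then (1 : ℚ) else 0) = 1 := by
  have key : ∀ c, a + c * t = b ↔ c = (b - a) / t := fun c => by
    rw [eq_div_iff ht]; constructor <;> intro h <;> linear_combination h
  simp [key]

lemma adj_mulVec_apply_zero (x : (Fin 2 → F) → ℚ) : (adj *ᵥ x) 0 = 0 := by
  simp [mulVec, dotProduct, adj]

lemma adj_mulVec_indNonzero : adj *ᵥ indNonzero = q • indNonzero (F := F) := by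
  ext v
  rcases eq_or_ne v 0 with rfl | hv
  · simp [adj_mulVec_apply_zero, indNonzero]
  obtain ⟨p, hp⟩ := exists_wedge_eq_one hv
  simp [adj_mulVec_apply hp, indNonzero, hv, add_smul_ne_zero_of_wedge_eq_one hp]

lemma adj_mulVec_indLine {w : Fin 2 → F} (hw : w ≠ 0) :
    adj *ᵥ indLine w = indNonzero - indLine w := by
  ext v
  rcases eq_or_ne v 0 with rfl | hv
  · simp [adj_mulVec_apply_zero, indNonzero, indLine]
  obtain ⟨p, hp⟩ := exists_wedge_eq_one hv
  simp only [adj_mulVec_apply hp, indLine, indNonzero, Pi.sub_apply, wedge_add_left,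
    wedge_smul_left, ne_eq, add_smul_ne_zero_of_wedge_eq_one hp, not_false_eq_true, true_and, hv]
  by_cases hvw : wedge v w = 0
  · have hpw : wedge p w ≠ 0 := by
      intro h
      apply hw
      rw [eq_smul_of_wedge_eq_zero hp hvw, wedge_swap, h, neg_zero, zero_smul]
    simp [hvw, hpw]
  · simpa [hvw] using sum_boole_add_mul_eq (wedge p w) 0 hvw

lemma adj_mulVec_adj_mulVec_single {w : Fin 2 → F} (hw : w ≠ 0) :
    adj *ᵥ (adj *ᵥ Pi.single w 1) = indNonzero - indLine w + q • Pi.single (-w) 1 := by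
  ext v
  rcases eq_or_ne v 0 with rfl | hv
  · simp [adj_mulVec_apply_zero, indNonzero, indLine, hw]
  obtain ⟨p, hp⟩ := exists_wedge_eq_one hv
  rw [adj_mulVec_apply hp]
  simp only [mulVec_single_one, col_apply, adj, of_apply, wedge_add_left,
    wedge_smul_left, indLine, indNonzero, Pi.add_apply, Pi.sub_apply, Pi.smul_apply,
    Pi.single_apply, smul_eq_mul, ne_eq, hv, not_false_eq_true, true_and]
  by_cases hvw : wedge v w = 0
  · have hneg : v = -w ↔ wedge p w = 1 := by
      have hwv : -w = wedge p w • v := by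
        conv_lhs => rw [eq_smul_of_wedge_eq_zero hp hvw, wedge_swap, neg_smul, neg_neg]
      rw [hwv, eq_comm, ← (smul_left_injective F hv).eq_iff, one_smul]
    simp [hvw, hneg]
  · have hne : v ≠ -w := by rintro rfl; simp [wedge_neg_left] at hvw
    simpa [hvw, hne] using sum_boole_add_mul_eq (wedge p w) 1 hvw

lemma adj_pow_mulVec_single {w : Fin 2 → F} (hw : w ≠ 0) (m : ℕ) :
    adj ^ (2 * m) *ᵥ Pi.single w 1 = ((q ^ (2 * m) - 1) / (q ^ 2 - 1)) • indNonzero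
      - ((q ^ m - 1) / (q - 1)) • indLine w + q ^ m • Pi.single ((-1 : F) ^ m • w) 1 := by
  induction m with
  | zero => simp [-mulVec_single]
  | succ m ih =>
    have hc : (-1 : F) ^ m ≠ 0 := pow_ne_zero _ (neg_ne_zero.2 one_ne_zero)
    have hneg : -((-1 : F) ^ m • w) = (-1 : F) ^ (m + 1) • w := by
      rw [pow_succ, mul_neg_one, neg_smul]
    have hq : 1 < q := by exact_mod_cast Fintype.one_lt_card
    have hq1 : q - 1 ≠ 0 := by linarith
    have hq2 : q ^ 2 - 1 ≠ 0 := by nlinarith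
    rw [show 2 * (m + 1) = 2 * m + 1 + 1 by ring, pow_succ', pow_succ', ← mulVec_mulVec,
      ← mulVec_mulVec, ih]
    simp only [mulVec_add, mulVec_sub, mulVec_smul, adj_mulVec_indNonzero, adj_mulVec_indLine hw,
      adj_mulVec_adj_mulVec_single (smul_ne_zero hc hw), indLine_smul hc, hneg]
    match_scalars <;> field_simp <;> ring

lemma adj_pow_mulVec_single_apply {w v : Fin 2 → F} (hw : w ≠ 0) (hvw : wedge v w ≠ 0)
    (m : ℕ) : (adj ^ (2 * m) *ᵥ Pi.single w 1) v = (q ^ (2 * m) - 1) / (q ^ 2 - 1) := by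
  have hv : v ≠ 0 := by rintro rfl; simp at hvw
  have hvw' : v ≠ (-1 : F) ^ m • w := by rintro rfl; simp [wedge_smul_left] at hvw
  simp [-mulVec_single, adj_pow_mulVec_single hw, indNonzero, indLine, hv, hvw, hvw']

end Field

end Quiddity

open Quiddity

theorem stmt15_general {F : Type*} [Field F] [Fintype F]
    (n : ℕ) (hodd : Odd n) :
    (Nat.card {a : Fin n → F // M a = 1} : ℚ) =
        ((Fintype.card F : ℚ) ^ (n - 1) - 1) / ((Fintype.card F : ℚ) ^ 2 - 1) ∧
      (Nat.card {a : Fin n → F // M a = -1} : ℚ) =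
        ((Fintype.card F : ℚ) ^ (n - 1) - 1) / ((Fintype.card F : ℚ) ^ 2 - 1) := by
  classical
  obtain ⟨m, rfl⟩ := hodd
  have key : ∀ g : Matrix (Fin 2) (Fin 2) F, g.det = 1 → g 1 1 ≠ 0 →
      (Nat.card {a : Fin (2 * m + 1) → F // M a = g} : ℚ) =
        ((Fintype.card F : ℚ) ^ (2 * m + 1 - 1) - 1) / ((Fintype.card F : ℚ) ^ 2 - 1) := by
    intro g hdet h11
    rw [card_M_eq hdet, Nat.add_sub_cancel, adj_pow_mulVec_single_apply]
    · simp
    · simpa [wedge] using h11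
  exact ⟨key 1 Matrix.det_one (by simp), key (-1) (by simp [Matrix.det_neg]) (by simp)⟩

theorem stmt15 {F : Type*} [Field F] [Fintype F] (hq : Odd (Fintype.card F))
    (n : ℕ) (hn : 4 < n) (hodd : Odd n) :
    (Nat.card {a : Fin n → F // M a = 1} : ℚ) =
        ((Fintype.card F : ℚ) ^ (n - 1) - 1) / ((Fintype.card F : ℚ) ^ 2 - 1) ∧
      (Nat.card {a : Fin n → F // M a = -1} : ℚ) =
        ((Fintype.card F : ℚ) ^ (n - 1) - 1) / ((Fintype.card F : ℚ) ^ 2 - 1) :=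
  stmt15_general n hodd
end

section
/- Let q be a power of an odd prime and n = 2m > 4. The number of n-tuples (a_1,...,a_n) in F_q^n with M_n(a_1,...,a_n) = Id equals (q-1)·(q^m-1)(q^{m-1}-1)/((q-1)(q^2-1)) + q^{m-1} if m is even, and equals (q-1)·(q^m-1)(q^{m-1}-1)/((q-1)(q^2-1)) if m is odd. -/
section

variable {A : Type*} [CommRing A]

def matInv (t : A) : Matrix (Fin 2) (Fin 2) A := !![0, 1; -1, t]

lemma matInv_mul_mat (t : A) : matInv t * mat t = 1 := by
  simp [matInv, mat, Matrix.one_fin_two]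

lemma mat_mul_matInv (t : A) : mat t * matInv t = 1 := by
  simp [matInv, mat, Matrix.one_fin_two]

lemma det_matInv (t : A) : (matInv t).det = 1 := by
  simp [matInv, Matrix.det_fin_two]

lemma mat_mul_eq_iff (t : A) (X g : Matrix (Fin 2) (Fin 2) A) :
    mat t * X = g ↔ X = matInv t * g := by
  constructor
  · rintro rfl
    rw [← mul_assoc, matInv_mul_mat, one_mul]
  · rintro rfl
    rw [← mul_assoc, mat_mul_matInv, one_mul]

lemma eq_mat_iff_of_det_eq_one {g : Matrix (Fin 2) (Fin 2) A} (hg : g.det = 1) (t : A) :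
    g = mat t ↔ t = g 0 0 ∧ g 1 0 = 1 ∧ g 1 1 = 0 := by
  constructor
  · rintro rfl
    simp [mat]
  · rintro ⟨rfl, h10, h11⟩
    rw [Matrix.det_fin_two, h10, h11] at hg
    ext i j
    fin_cases i <;> fin_cases j <;> simp [mat, h10, h11]
    linear_combination -hg

lemma M_of_fin_zero (a : Fin 0 → A) : M a = 1 := by
  simp [M]

lemma M_snoc {k : ℕ} (a : Fin k → A) (t : A) : M (Fin.snoc a t) = mat t * M a := by
  rw [M, List.ofFn_succ']
  simp [M]

noncomputable def numSolutions (ℓ : ℕ) (g : Matrix (Fin 2) (Fin 2) A) : ℕ :=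
  Nat.card {a : Fin ℓ → A // M a = g}

open scoped Classical in
lemma numSolutions_zero (g : Matrix (Fin 2) (Fin 2) A) :
    numSolutions 0 g = if g = 1 then 1 else 0 := by
  simp only [numSolutions, M_of_fin_zero]
  split_ifs with h
  · simp [h]
  · simp [Ne.symm h]

lemma numSolutions_succ [Fintype A] (k : ℕ) (g : Matrix (Fin 2) (Fin 2) A) :
    numSolutions (k + 1) g = ∑ t, numSolutions k (matInv t * g) := by
  let e : {p : A × (Fin k → A) // M p.2 = matInv p.1 * g} ≃ {a : Fin (k + 1) → A // M a = g} :=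
    (Fin.snocEquiv fun _ => A).subtypeEquiv fun p => by
      change _ ↔ M (Fin.snoc p.2 p.1) = g
      rw [M_snoc, mat_mul_eq_iff]
  rw [numSolutions, ← Nat.card_congr e,
    Nat.card_congr (Equiv.subtypeProdEquivSigmaSubtype fun t b => M b = matInv t * g),
    Nat.card_sigma]
  rfl

end

section

variable {F : Type*} [Field F] [DecidableEq F]

def pmCases (a b c : ℚ) (x : F) : ℚ :=
  if x = 1 then a else if x = -1 then b else c

lemma pmCases_inv (a b c : ℚ) (x : F) : pmCases a b c x⁻¹ = pmCases a b c x := by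
  simp only [pmCases, inv_eq_iff_eq_inv, inv_neg, inv_one]

lemma pmCases_neg (h2 : (2 : F) ≠ 0) (a b c : ℚ) (x : F) :
    pmCases a b c (-x) = pmCases b a c x := by
  have h1 : (1 : F) ≠ -1 := fun h => h2 (by linear_combination h)
  simp only [pmCases, neg_eq_iff_eq_neg]
  split_ifs <;> simp_all

lemma sum_ite_eq_zero_pmCases [Fintype F] (h2 : (2 : F) ≠ 0) (d a b c : ℚ) :
    ∑ y : F, (if y = 0 then d else pmCases a b c y) =
      d + a + b + ((Fintype.card F : ℚ) - 3) * c := by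
  have h1 : (1 : F) ≠ -1 := fun h => h2 (by linear_combination h)
  have hsplit : ∀ y : F, (if y = 0 then d else pmCases a b c y) =
      c + ((if y = 0 then d - c else 0) + (if y = 1 then a - c else 0) +
        (if y = -1 then b - c else 0)) := by
    intro y
    unfold pmCases
    split_ifs <;> simp_all
  simp only [hsplit, Finset.sum_add_distrib, Finset.sum_ite_eq', Finset.mem_univ, if_true,
    Finset.sum_const, Finset.card_univ, nsmul_eq_mul]
  ring

/-- The values of `numSolutions (k + 1) g` on the six classes of bottom rows of `g`, read off by
`eval`. -/
structure LumpedCount where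
  one : ℚ
  negOne : ℚ
  other : ℚ
  zeroOne : ℚ
  zeroNegOne : ℚ
  zeroOther : ℚ

namespace LumpedCount

def eval (s : LumpedCount) (x y : F) : ℚ :=
  if y = 0 then pmCases s.zeroOne s.zeroNegOne s.zeroOther x else pmCases s.one s.negOne s.other y

def step (q : ℚ) (s : LumpedCount) : LumpedCount where
  one := s.one + s.negOne + (q - 3) * s.other + s.zeroNegOne
  negOne := s.one + s.negOne + (q - 3) * s.other + s.zeroOne
  other := s.one + s.negOne + (q - 3) * s.other + s.zeroOther
  zeroOne := q * s.one
  zeroNegOne := q * s.negOne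
  zeroOther := q * s.other

lemma sum_eval_line [Fintype F] (h2 : (2 : F) ≠ 0) (s : LumpedCount) {v₀ v₁ w₀ w₁ : F}
    (hdet : w₀ * v₁ - w₁ * v₀ = 1) :
    ∑ t : F, s.eval (t * v₀ - w₀) (t * v₁ - w₁) = (s.step (Fintype.card F)).eval v₀ v₁ := by
  -- `u = t • v - w` runs over the line `u₀ v₁ - u₁ v₀ = -1`; when `v₁ ≠ 0` it is parametrised by
  -- `u₁`, and `u₁ = 0` forces `u₀ = -v₁⁻¹`.
  rcases eq_or_ne v₁ 0 with rfl | hv₁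
  · have hv₀ : v₀ ≠ 0 := by rintro rfl; simp at hdet
    have hw₁ : -w₁ = v₀⁻¹ := eq_inv_of_mul_eq_one_left (by linear_combination hdet)
    have hterm : ∀ t : F, s.eval (t * v₀ - w₀) (t * 0 - w₁) =
        pmCases s.one s.negOne s.other v₀ := by
      intro t
      rw [eval, mul_zero, zero_sub, hw₁, if_neg (inv_ne_zero hv₀), pmCases_inv]
    rw [Finset.sum_congr rfl fun t _ => hterm t, Finset.sum_const, Finset.card_univ,
      nsmul_eq_mul]
    simp only [eval, step, if_pos]
    unfold pmCases
    split_ifs <;> rfl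
  · set G : F → ℚ := fun y =>
      if y = 0 then pmCases s.zeroOne s.zeroNegOne s.zeroOther (-v₁⁻¹)
      else pmCases s.one s.negOne s.other y
    have hterm : ∀ t : F, s.eval (t * v₀ - w₀) (t * v₁ - w₁) = G (t * v₁ - w₁) := by
      intro t
      simp only [eval, G]
      split_ifs with hy
      · congr 1
        field_simp
        linear_combination v₀ * hy - hdet
      · rfl
    have hbij : Function.Bijective fun t : F => t * v₁ - w₁ :=
      (Equiv.subRight w₁).bijective.comp (mulRight_bijective₀ v₁ hv₁)
    rw [Fintype.sum_bijective _ hbij _ G hterm, sum_ite_eq_zero_pmCases h2, pmCases_neg h2,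
      pmCases_inv]
    simp only [eval, step, if_neg hv₁]
    unfold pmCases
    split_ifs <;> ring

def seq (q : ℚ) : ℕ → LumpedCount
  | 0 => ⟨0, 0, 0, 1, 0, 0⟩
  | k + 1 => (seq q k).step q

/-- Solution of the two-step recursion `step q ∘ step q`; after an even number of steps the three
classes with `y ≠ 0` carry the same value. -/
def evenClosedForm (q : ℚ) (k : ℕ) : LumpedCount where
  one := (q ^ (2 * k) - 1) / (q ^ 2 - 1)
  negOne := (q ^ (2 * k) - 1) / (q ^ 2 - 1)
  other := (q ^ (2 * k) - 1) / (q ^ 2 - 1)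
  zeroOne := (q ^ (2 * k) + q) / (q ^ 2 - 1) + q ^ k * ((q - 3) / (q - 1) + (-1) ^ k) / 2
  zeroNegOne := (q ^ (2 * k) + q) / (q ^ 2 - 1) + q ^ k * ((q - 3) / (q - 1) - (-1) ^ k) / 2
  zeroOther := (q ^ (2 * k) + q) / (q ^ 2 - 1) - q ^ k / (q - 1)

lemma seq_two_mul {q : ℚ} (hq₁ : q - 1 ≠ 0) (hq₂ : q ^ 2 - 1 ≠ 0) (k : ℕ) :
    seq q (2 * k) = evenClosedForm q k := by
  induction k with
  | zero =>
    simp only [seq, evenClosedForm, mul_zero, pow_zero, mk.injEq]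
    refine ⟨?_, ?_, ?_, ?_, ?_, ?_⟩ <;> field_simp <;> ring
  | succ k ih =>
    rw [show 2 * (k + 1) = 2 * k + 1 + 1 by ring, seq, seq, ih]
    simp only [step, evenClosedForm, mk.injEq]
    refine ⟨?_, ?_, ?_, ?_, ?_, ?_⟩ <;> field_simp <;> ring

end LumpedCount

open LumpedCount in
theorem numSolutions_succ_eq_eval [Fintype F] (h2 : (2 : F) ≠ 0) (k : ℕ)
    {g : Matrix (Fin 2) (Fin 2) F} (hg : g.det = 1) :
    (numSolutions (k + 1) g : ℚ) = (seq (Fintype.card F) k).eval (g 1 0) (g 1 1) := by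
  induction k generalizing g with
  | zero =>
    have hsol : ∀ t, matInv t * g = 1 ↔ t = g 0 0 ∧ g 1 0 = 1 ∧ g 1 1 = 0 := fun t => by
      rw [eq_comm, ← mat_mul_eq_iff, mul_one, eq_comm, eq_mat_iff_of_det_eq_one hg]
    simp only [numSolutions_succ, numSolutions_zero, hsol, ite_and, Finset.sum_ite_eq',
      Finset.mem_univ, if_true]
    simp only [eval, seq, pmCases]
    split_ifs <;> simp_all
  | succ k ih =>
    have hrow : ∀ t, (matInv t * g) 1 0 = t * g 1 0 - g 0 0 ∧
        (matInv t * g) 1 1 = t * g 1 1 - g 0 1 := fun t => by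
      simp [matInv, Matrix.mul_apply, Fin.sum_univ_two]
      constructor <;> ring
    rw [numSolutions_succ, Nat.cast_sum, seq]
    rw [Finset.sum_congr rfl fun t _ => by
      rw [ih (by rw [Matrix.det_mul, det_matInv, hg, one_mul]), (hrow t).1, (hrow t).2]]
    exact sum_eval_line h2 _ (by rw [Matrix.det_fin_two] at hg; linear_combination hg)

end

theorem stmt16 {F : Type*} [Field F] [Fintype F] (hq : Odd (Fintype.card F))
    (n m : ℕ) (hnm : n = 2 * m) (hn : 4 < n) :
    (Even m →
      (Nat.card {a : Fin n → F // M a = 1} : ℚ) =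
        ((Fintype.card F : ℚ) - 1) *
            (((Fintype.card F : ℚ) ^ m - 1) * ((Fintype.card F : ℚ) ^ (m - 1) - 1) /
              (((Fintype.card F : ℚ) - 1) * ((Fintype.card F : ℚ) ^ 2 - 1))) +
          (Fintype.card F : ℚ) ^ (m - 1)) ∧
    (Odd m →
      (Nat.card {a : Fin n → F // M a = 1} : ℚ) =
        ((Fintype.card F : ℚ) - 1) *
          (((Fintype.card F : ℚ) ^ m - 1) * ((Fintype.card F : ℚ) ^ (m - 1) - 1) /
            (((Fintype.card F : ℚ) - 1) * ((Fintype.card F : ℚ) ^ 2 - 1)))) := by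
  classical
  have h2 : (2 : F) ≠ 0 := Ring.two_ne_zero fun h => by
    rw [FiniteField.even_card_iff_char_two, ← Nat.even_iff] at h
    exact Nat.not_even_iff_odd.mpr hq h
  obtain ⟨k, rfl⟩ : ∃ k, m = k + 1 := ⟨m - 1, by omega⟩
  obtain rfl : n = 2 * k + 1 + 1 := by omega
  set q : ℚ := (Fintype.card F : ℚ)
  have hq_one : (1 : ℚ) < q := Nat.one_lt_cast.mpr Fintype.one_lt_card
  have hq₁ : q - 1 ≠ 0 := by linarith
  have hq₂ : q ^ 2 - 1 ≠ 0 := by nlinarith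
  have hcount : (Nat.card {a : Fin (2 * k + 1 + 1) → F // M a = 1} : ℚ) =
      ((LumpedCount.evenClosedForm q k).step q).one := by
    have h := numSolutions_succ_eq_eval h2 (2 * k + 1) Matrix.det_one
    rwa [LumpedCount.seq, LumpedCount.seq_two_mul hq₁ hq₂,
      LumpedCount.eval, if_neg (by simp), Matrix.one_apply_eq, pmCases, if_pos rfl] at h
  rw [hcount]
  simp only [LumpedCount.step, LumpedCount.evenClosedForm, Nat.add_sub_cancel]
  constructor
  · intro hm
    rw [(Nat.not_even_iff_odd.mp (Nat.even_add_one.mp hm)).neg_one_pow]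
    field_simp
    ring
  · intro hm
    rw [(Nat.not_odd_iff_even.mp (Nat.odd_add_one.mp hm)).neg_one_pow]
    field_simp
    ring
end

section
/- Over Z/NZ (N ≥ 2), a 4-tuple (a_1,a_2,a_3,a_4) with M_4(a_1,a_2,a_3,a_4) = ±Id is reducible if and only if some a_i equals 1 or -1. Here reducible means the tuple is equivalent (up to cyclic permutations and reversal) to a sum (b_1,...,b_m) ⊕ (c_1,...,c_l) where (c_1,...,c_l) also satisfies M_l(c) = ±Id and m, l ≥ 3; for size 4 this forces m = l = 3, and the explicit decomposition for a_4 = ε ∈ {1,-1} is (a_1,a_2,a_3,ε) = (a_1-ε, a_2, a_3-ε) ⊕ (ε,ε,ε). -/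
/-! The lower right entry of `M₃(c)` is `-c₂`, so a λ-quiddity of size 3 has middle entry `±1`,
and in a sum `b ⊕ c` of two triples this entry appears unchanged. Conversely, if `aᵢ = ε = ±1`,
rotating `aᵢ` to the last place exhibits `a` as `(a_{i+1} - ε, a_{i+2}, a_{i+3} - ε) ⊕ (ε, ε, ε)`. -/

section CommRing

variable {A : Type*} [CommRing A]

lemma M_three_one_one (c : Fin 3 → A) : M c 1 1 = -c 1 := by
  simp [M, List.ofFn_succ, mat, Matrix.mul_apply, Fin.sum_univ_succ]

lemma eq_one_or_eq_neg_one_of_M_three (c : Fin 3 → A) (hc : M c = 1 ∨ M c = -1) :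
    c 1 = 1 ∨ c 1 = -1 := by
  have h := M_three_one_one c
  rcases hc with hc | hc <;> simp only [hc, Matrix.one_apply_eq, Matrix.neg_apply] at h
  · exact Or.inr (neg_eq_iff_eq_neg.mp h.symm)
  · exact Or.inl (neg_inj.mp h.symm)

lemma M_const_one : M (fun _ : Fin 3 => (1 : A)) = -1 := by
  ext i j; fin_cases i <;> fin_cases j <;>
    simp [M, List.ofFn_succ, mat, Matrix.mul_apply, Fin.sum_univ_succ]

lemma M_const_neg_one : M (fun _ : Fin 3 => (-1 : A)) = 1 := by
  ext i j; fin_cases i <;> fin_cases j <;>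
    simp [M, List.ofFn_succ, mat, Matrix.mul_apply, Fin.sum_univ_succ]

lemma M_const_of_eq_one_or_eq_neg_one {ε : A} (hε : ε = 1 ∨ ε = -1) :
    M (fun _ : Fin 3 => ε) = 1 ∨ M (fun _ : Fin 3 => ε) = -1 := by
  rcases hε with rfl | rfl
  · exact Or.inr M_const_one
  · exact Or.inl M_const_neg_one

lemma eq_rotate_sum_three (a : Fin 4 → A) (i : Fin 4) :
    ∀ j, a j = ![(a (i + 1) - a i) + a i, a (i + 2), (a (i + 3) - a i) + a i, a i]
      (j + (3 - i)) := by
  intro j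
  obtain ⟨t, rfl⟩ : ∃ t, j = i + t := ⟨j - i, by abel⟩
  rw [show i + t + (3 - i) = 3 + t by abel]
  fin_cases t <;> simp

end CommRing

theorem stmt19_general (N : ℕ) (a : Fin 4 → ZMod N) :
    (∃ b c : Fin 3 → ZMod N, (M c = 1 ∨ M c = -1) ∧
      ∃ k : Fin 4,
        (∀ i, a i = ![b 0 + c 2, b 1, b 2 + c 0, c 1] (i + k)) ∨
        (∀ i, a i = ![b 0 + c 2, b 1, b 2 + c 0, c 1] (k - i))) ↔
    (∃ i, a i = 1 ∨ a i = -1) := by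
  constructor
  · rintro ⟨b, c, hc, k, h | h⟩
    · refine ⟨3 - k, ?_⟩
      rw [h, sub_add_cancel]
      exact eq_one_or_eq_neg_one_of_M_three c hc
    · refine ⟨k - 3, ?_⟩
      rw [h, sub_sub_cancel]
      exact eq_one_or_eq_neg_one_of_M_three c hc
  · rintro ⟨i, hi⟩
    exact ⟨![a (i + 1) - a i, a (i + 2), a (i + 3) - a i], fun _ => a i,
      M_const_of_eq_one_or_eq_neg_one hi, 3 - i, Or.inl (eq_rotate_sum_three a i)⟩

theorem stmt19 (N : ℕ) (hN : 2 ≤ N) (a : Fin 4 → ZMod N)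
    (ha : M a = 1 ∨ M a = -1) :
    (∃ b c : Fin 3 → ZMod N, (M c = 1 ∨ M c = -1) ∧
      ∃ k : Fin 4,
        (∀ i, a i = ![b 0 + c 2, b 1, b 2 + c 0, c 1] (i + k)) ∨
        (∀ i, a i = ![b 0 + c 2, b 1, b 2 + c 0, c 1] (k - i))) ↔
    (∃ i, a i = 1 ∨ a i = -1) :=
  stmt19_general N a
end
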